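/- arXiv:2007.04059 — 4 statements merged into one kernel-verified Lean document; each statement's English description precedes it below -/
import Mathlib

section
/- Given a colorful k-center instance and a feasible fractional solution (x, z) to LP1, there exist a set S ⊆ {j ∈ P : z_j > 0}, pairwise disjoint sets C_j ⊆ 𝓕(j) for j ∈ S, and a function y : S → [0, 1] such that Σ_{j ∈ S} y_j ≤ k, Σ_{j ∈ S} |C_j ∩ B| · y_j ≥ b, and Σ_{j ∈ S} |C_j ∩ R| · y_j ≥ r. -/
open scoped Classical

/-- The ball of radius `ρ` around `j` in a finite metric space. -/
noncomputable def bal {P : Type*} [Fintype P] [MetricSpace P] (j : P) (ρ : ℝ) : Finset P :=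
  Finset.univ.filter fun i => dist i j ≤ ρ

/-- The flower centered at `j`: the union of unit balls around points of the unit ball at `j`. -/
noncomputable def flower {P : Type*} [Fintype P] [MetricSpace P] (j : P) : Finset P :=
  (bal j 1).biUnion fun i => bal i 1

/-!
Greedily pick a point `j` of maximal weight `z j` among those of positive weight not yet
clustered, and let its cluster consist of all remaining points whose unit ball meets the unit
ball of `j`; such points lie in the flower of `j`. The chosen centers have pairwise disjoint
unit balls, so the covering constraints of LP1 give `∑_{j ∈ S} z j ≤ ∑ x ≤ k`. Taking `y = z`,
every point `p` of positive weight lies in the cluster of a center `j` with `z p ≤ z j`, so any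
colour class `A` satisfies `∑_{p ∈ A} z p ≤ ∑_{j ∈ S} |C j ∩ A| z j`.
-/

open Finset

section Clustering

variable {α β : Type*} [LinearOrder β]

structure IsClustering (N : α → Finset α) (w : α → β) (T S : Finset α) (C : α → Finset α) :
    Prop where
  subset : S ⊆ T
  biUnion_eq : S.biUnion C = T
  pairwiseDisjoint_clusters : (S : Set α).PairwiseDisjoint C
  pairwiseDisjoint_nbhds : (S : Set α).PairwiseDisjoint N
  le_of_mem : ∀ j ∈ S, ∀ p ∈ C j, w p ≤ w j
  not_disjoint_of_mem : ∀ j ∈ S, ∀ p ∈ C j, ¬Disjoint (N p) (N j)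

theorem isClustering_empty (N : α → Finset α) (w : α → β) :
    IsClustering N w ∅ ∅ fun _ => ∅ where
  subset := subset_refl _
  biUnion_eq := rfl
  pairwiseDisjoint_clusters := by simp
  pairwiseDisjoint_nbhds := by simp
  le_of_mem := by simp
  not_disjoint_of_mem := by simp

theorem IsClustering.insert {N : α → Finset α} {w : α → β} {T S : Finset α}
    {C : α → Finset α} {j : α} (hNj : j ∈ N j) (hjT : j ∈ T) (hjmax : ∀ p ∈ T, w p ≤ w j)
    (h : IsClustering N w (T \ T.filter fun p => ¬Disjoint (N p) (N j)) S C) :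
    IsClustering N w T (insert j S)
      (Function.update C j (T.filter fun p => ¬Disjoint (N p) (N j))) := by
  set Cj := T.filter fun p => ¬Disjoint (N p) (N j)
  have hjCj : j ∈ Cj := mem_filter.2 ⟨hjT, not_disjoint_iff.2 ⟨j, hNj, hNj⟩⟩
  have hS : ∀ m ∈ S, m ∈ T ∧ Disjoint (N m) (N j) := fun m hm => by
    have := mem_sdiff.1 (h.subset hm)
    exact ⟨this.1, not_not.1 fun hmj => this.2 (mem_filter.2 ⟨this.1, hmj⟩)⟩
  have hne : ∀ m ∈ S, m ≠ j := fun m hm hmj => (mem_sdiff.1 (h.subset hm)).2 (hmj ▸ hjCj)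
  have hupd : ∀ m ∈ S, Function.update C j Cj m = C m := fun m hm =>
    Function.update_of_ne (hne m hm) _ _
  have hCT : ∀ m ∈ S, C m ⊆ T \ Cj := fun m hm =>
    h.biUnion_eq ▸ subset_biUnion_of_mem C hm
  refine ⟨insert_subset hjT fun m hm => (hS m hm).1, ?_, ?_, ?_, ?_, ?_⟩
  · rw [biUnion_insert, Function.update_self, biUnion_congr rfl hupd, h.biUnion_eq,
      union_sdiff_of_subset (filter_subset _ _)]
  · rw [coe_insert]
    refine (h.pairwiseDisjoint_clusters.mono_on fun m hm => (hupd m hm).le).insert ?_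
    intro m hm _
    rw [Function.update_self, hupd m hm]
    exact disjoint_left.2 fun p hpj hpm => (mem_sdiff.1 (hCT m hm hpm)).2 hpj
  · rw [coe_insert]
    exact h.pairwiseDisjoint_nbhds.insert fun m hm _ => (hS m hm).2.symm
  · intro m hm p hp
    rcases mem_insert.1 hm with rfl | hm
    · rw [Function.update_self] at hp
      exact hjmax p (mem_filter.1 hp).1
    · exact h.le_of_mem m hm p (hupd m hm ▸ hp)
  · intro m hm p hp
    rcases mem_insert.1 hm with rfl | hm
    · rw [Function.update_self] at hp
      exact (mem_filter.1 hp).2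
    · exact h.not_disjoint_of_mem m hm p (hupd m hm ▸ hp)

theorem exists_isClustering (N : α → Finset α) (hN : ∀ j, j ∈ N j) (w : α → β) (T : Finset α) :
    ∃ S C, IsClustering N w T S C := by
  induction T using Finset.strongInduction with
  | _ T ih =>
    rcases T.eq_empty_or_nonempty with rfl | hT
    · exact ⟨∅, _, isClustering_empty N w⟩
    obtain ⟨j, hjT, hjmax⟩ := T.exists_max_image w hT
    have hjCj : j ∈ T.filter fun p => ¬Disjoint (N p) (N j) :=
      mem_filter.2 ⟨hjT, not_disjoint_iff.2 ⟨j, hN j, hN j⟩⟩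
    obtain ⟨S, C, hSC⟩ := ih _ (sdiff_ssubset (filter_subset _ _) ⟨j, hjCj⟩)
    exact ⟨_, _, hSC.insert (hN j) hjT hjmax⟩

end Clustering

theorem sum_sum_le_sum_of_pairwiseDisjoint {α : Type*} [Fintype α] {x : α → ℝ}
    (hx : ∀ i, 0 ≤ x i) {S : Finset α} {N : α → Finset α} (hN : (S : Set α).PairwiseDisjoint N) :
    ∑ j ∈ S, ∑ i ∈ N j, x i ≤ ∑ i, x i := by
  rw [← sum_biUnion hN]
  exact sum_le_univ_sum_of_nonneg hx

theorem sum_le_sum_card_inter_mul {α : Type*} {w : α → ℝ} {S : Finset α} {C : α → Finset α}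
    (hdisj : (S : Set α).PairwiseDisjoint C) (hle : ∀ j ∈ S, ∀ p ∈ C j, w p ≤ w j)
    (hcover : ∀ p, 0 < w p → p ∈ S.biUnion C) (A : Finset α) :
    ∑ p ∈ A, w p ≤ ∑ j ∈ S, (#(C j ∩ A) : ℝ) * w j := by
  have hnonpos : ∑ p ∈ A \ S.biUnion C, w p ≤ 0 :=
    sum_nonpos fun p hp => not_lt.1 fun hp' => (mem_sdiff.1 hp).2 (hcover p hp')
  have hsplit : ∑ p ∈ A ∩ S.biUnion C, w p = ∑ j ∈ S, ∑ p ∈ C j ∩ A, w p := by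
    rw [inter_comm, biUnion_inter,
      sum_biUnion (hdisj.mono fun j => inter_subset_left)]
  have hcluster : ∀ j ∈ S, ∑ p ∈ C j ∩ A, w p ≤ (#(C j ∩ A) : ℝ) * w j := fun j hj => by
    rw [← nsmul_eq_mul]
    exact sum_le_card_nsmul _ _ _ fun p hp => hle j hj p (mem_inter.1 hp).1
  calc ∑ p ∈ A, w p = ∑ p ∈ A ∩ S.biUnion C, w p + ∑ p ∈ A \ S.biUnion C, w p :=
        (sum_inter_add_sum_sdiff _ _ _).symm
    _ ≤ ∑ j ∈ S, ∑ p ∈ C j ∩ A, w p := by linarith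
    _ ≤ ∑ j ∈ S, (#(C j ∩ A) : ℝ) * w j := sum_le_sum hcluster

theorem mem_bal {P : Type*} [Fintype P] [MetricSpace P] {i j : P} {ρ : ℝ} :
    i ∈ bal j ρ ↔ dist i j ≤ ρ := by
  simp [bal]

theorem mem_flower_iff_not_disjoint_bal {P : Type*} [Fintype P] [MetricSpace P] {p j : P} :
    p ∈ flower j ↔ ¬Disjoint (bal p 1) (bal j 1) := by
  simp only [flower, mem_biUnion, not_disjoint_iff, mem_bal, dist_comm p]
  exact exists_congr fun _ => and_comm

theorem stmt0_general {P : Type*} [Fintype P] [MetricSpace P]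
    (R B : Finset P)
    (k r b : ℕ) (x z : P → ℝ)
    (hx0 : ∀ i, 0 ≤ x i)
    (hz1 : ∀ j, z j ≤ 1)
    (hcov : ∀ j : P, z j ≤ ∑ i ∈ bal j 1, x i)
    (hk : ∑ i : P, x i ≤ (k : ℝ))
    (hr : (r : ℝ) ≤ ∑ j ∈ R, z j)
    (hb : (b : ℝ) ≤ ∑ j ∈ B, z j) :
    ∃ (S : Finset P) (C : P → Finset P) (y : P → ℝ),
      (∀ j ∈ S, 0 < z j) ∧
      (∀ j ∈ S, C j ⊆ flower j) ∧
      (∀ j ∈ S, ∀ j' ∈ S, j ≠ j' → Disjoint (C j) (C j')) ∧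
      (∀ j ∈ S, 0 ≤ y j ∧ y j ≤ 1) ∧
      (∑ j ∈ S, y j ≤ (k : ℝ)) ∧
      ((b : ℝ) ≤ ∑ j ∈ S, ((C j ∩ B).card : ℝ) * y j) ∧
      ((r : ℝ) ≤ ∑ j ∈ S, ((C j ∩ R).card : ℝ) * y j) := by
  obtain ⟨S, C, hSC⟩ := exists_isClustering (fun j => bal j 1)
    (fun j => by simp [mem_bal]) z (univ.filter fun j => 0 < z j)
  have hSz : ∀ j ∈ S, 0 < z j := fun j hj => (mem_filter.1 (hSC.subset hj)).2
  have hcover : ∀ p, 0 < z p → p ∈ S.biUnion C := fun p hp => by simp [hSC.biUnion_eq, hp]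
  have hcharge := sum_le_sum_card_inter_mul hSC.pairwiseDisjoint_clusters hSC.le_of_mem hcover
  refine ⟨S, C, z, hSz,
    fun j hj p hp => mem_flower_iff_not_disjoint_bal.2 (hSC.not_disjoint_of_mem j hj p hp),
    fun j hj j' hj' hjj' => hSC.pairwiseDisjoint_clusters hj hj' hjj',
    fun j hj => ⟨(hSz j hj).le, hz1 j⟩, ?_, hb.trans (hcharge B), hr.trans (hcharge R)⟩
  calc ∑ j ∈ S, z j ≤ ∑ j ∈ S, ∑ i ∈ bal j 1, x i := sum_le_sum fun j _ => hcov j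
    _ ≤ ∑ i, x i := sum_sum_le_sum_of_pairwiseDisjoint hx0 hSC.pairwiseDisjoint_nbhds
    _ ≤ k := hk

/-- given a feasible fractional solution `(x, z)` to LP1, there exist
`S ⊆ {j : z j > 0}`, pairwise disjoint clusters `C j ⊆ 𝓕(j)` for `j ∈ S`, and
`y : S → [0,1]` with `∑ y ≤ k`, `∑ |C j ∩ B| y j ≥ b` and `∑ |C j ∩ R| y j ≥ r`. -/
theorem stmt0 {P : Type*} [Fintype P] [MetricSpace P]
    (R B : Finset P) (hpart : ∀ p : P, (p ∈ R ∧ p ∉ B) ∨ (p ∈ B ∧ p ∉ R))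
    (k r b : ℕ) (x z : P → ℝ)
    (hx0 : ∀ i, 0 ≤ x i) (hx1 : ∀ i, x i ≤ 1)
    (hz0 : ∀ j, 0 ≤ z j) (hz1 : ∀ j, z j ≤ 1)
    (hcov : ∀ j : P, z j ≤ ∑ i ∈ bal j 1, x i)
    (hk : ∑ i : P, x i ≤ (k : ℝ))
    (hr : (r : ℝ) ≤ ∑ j ∈ R, z j)
    (hb : (b : ℝ) ≤ ∑ j ∈ B, z j) :
    ∃ (S : Finset P) (C : P → Finset P) (y : P → ℝ),
      (∀ j ∈ S, 0 < z j) ∧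
      (∀ j ∈ S, C j ⊆ flower j) ∧
      (∀ j ∈ S, ∀ j' ∈ S, j ≠ j' → Disjoint (C j) (C j')) ∧
      (∀ j ∈ S, 0 ≤ y j ∧ y j ≤ 1) ∧
      (∑ j ∈ S, y j ≤ (k : ℝ)) ∧
      ((b : ℝ) ≤ ∑ j ∈ S, ((C j ∩ B).card : ℝ) * y j) ∧
      ((r : ℝ) ≤ ∑ j ∈ S, ((C j ∩ R).card : ℝ) * y j) :=
  stmt0_general R B k r b x z hx0 hz1 hcov hk hr hb
end

section
/- Given a colorful k-center instance and a feasible fractional solution (x, z) to LP1, there exists a set C ⊆ P with |C| ≤ k + 1 such that |B ∩ ∪_{c ∈ C} 𝓑(c, 2)| ≥ b and |R ∩ ∪_{c ∈ C} 𝓑(c, 2)| ≥ r; that is, at most k + 1 balls of radius two suffice to cover at least r red points and at least b blue points. -/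
open scoped Classical

/-!
Cluster greedily: take the remaining point `c` of largest `z`, assign to it every remaining point
within distance `2`, and repeat. The centres are more than `2` apart, so their unit balls are
disjoint and `∑ z c ≤ ∑ x(𝓑(c)) ≤ k` over the centres. Weighting each centre by `z c` and by the
number of red (blue) points assigned to it gives a point `w` of the unit cube with `∑ w ≤ k`
whose two weighted sums are at least `r` and `b`. While `w` has three fractional coordinates,
some direction supported on them annihilates both weighted sums and does not increase `∑ w`;
moving along it until a coordinate reaches `0` or `1` leaves at most two fractional coordinates,
and then the support of `w` has at most `k + 1` elements. The radius-`2` balls around these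
centres contain every point assigned to them.
-/

open Finset

noncomputable section

def exitTime (w d : ℝ) : ℝ := if 0 < d then (1 - w) / d else -w / d

lemma exitTime_pos {w d : ℝ} (hw : w ∈ Set.Ioo 0 1) (hd : d ≠ 0) : 0 < exitTime w d := by
  unfold exitTime
  split_ifs with h
  · exact div_pos (by linarith [hw.2]) h
  · exact div_pos_of_neg_of_neg (by linarith [hw.1]) (lt_of_le_of_ne (not_lt.mp h) hd)

lemma add_mul_mem_Icc_of_le_exitTime {w d t : ℝ} (hw : w ∈ Set.Icc 0 1) (ht : 0 ≤ t)
    (hte : t ≤ exitTime w d) : w + t * d ∈ Set.Icc 0 1 := by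
  unfold exitTime at hte
  rcases lt_trichotomy d 0 with hd | rfl | hd
  · rw [if_neg hd.not_gt, le_div_iff_of_neg hd] at hte
    constructor <;> nlinarith [hw.1, hw.2]
  · simpa using hw
  · rw [if_pos hd, le_div_iff₀ hd] at hte
    constructor <;> nlinarith [hw.1, hw.2]

lemma add_exitTime_mul_notMem_Ioo {w d : ℝ} (hd : d ≠ 0) :
    w + exitTime w d * d ∉ Set.Ioo 0 1 := by
  unfold exitTime
  split_ifs <;> field_simp <;> simp

variable {ι : Type*} [Fintype ι]

lemma exists_pos_exit_cube {w d : ι → ℝ} (hw : ∀ i, w i ∈ Set.Icc 0 1)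
    (hwd : ∀ i, d i ≠ 0 → w i ∈ Set.Ioo 0 1) (hd : d ≠ 0) :
    ∃ ε > 0, (∀ i, w i + ε * d i ∈ Set.Icc 0 1) ∧ ∃ i, d i ≠ 0 ∧ w i + ε * d i ∉ Set.Ioo 0 1 := by
  have hmoving : (univ.filter fun i => d i ≠ 0).Nonempty := by
    simpa [Finset.filter_nonempty_iff, Function.ne_iff] using hd
  obtain ⟨i₀, hi₀, hmin⟩ := exists_min_image _ (fun i => exitTime (w i) (d i)) hmoving
  have hdi₀ : d i₀ ≠ 0 := (mem_filter.mp hi₀).2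
  refine ⟨exitTime (w i₀) (d i₀), exitTime_pos (hwd i₀ hdi₀) hdi₀, fun i => ?_,
    i₀, hdi₀, add_exitTime_mul_notMem_Ioo hdi₀⟩
  by_cases hdi : d i = 0
  · simpa [hdi] using hw i
  · exact add_mul_mem_Icc_of_le_exitTime (hw i) (exitTime_pos (hwd i₀ hdi₀) hdi₀).le
      (hmin i (by simpa using hdi))

lemma exists_ne_zero_sum_mul_eq_zero (a b : ι → ℝ) {F : Finset ι} (hF : 2 < #F) :
    ∃ δ : ι → ℝ, δ ≠ 0 ∧ (∀ i, δ i ≠ 0 → i ∈ F) ∧ ∑ i, a i * δ i = 0 ∧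
      ∑ i, b i * δ i = 0 ∧ ∑ i, δ i ≤ 0 := by
  have hdep : ¬ LinearIndepOn ℝ (fun i => ![a i, b i]) (F : Set ι) := fun h => by
    have := h.fintype_card_le_finrank
    simp at this
    omega
  obtain ⟨g, hg, i, hiF, hgi⟩ := not_linearIndepOn_finset_iff.mp hdep
  set δ : ι → ℝ := fun i => if i ∈ F then g i else 0
  have hsum : ∀ c : ι → ℝ, ∑ i, c i * δ i = ∑ i ∈ F, g i * c i := fun c => by
    simp only [δ, mul_ite, mul_zero, Fintype.sum_ite_mem]
    exact sum_congr rfl fun _ _ => mul_comm _ _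
  have ha : ∑ i, a i * δ i = 0 := by simpa [hsum] using congrFun hg 0
  have hb : ∑ i, b i * δ i = 0 := by simpa [hsum] using congrFun hg 1
  have hsupp : ∀ i, δ i ≠ 0 → i ∈ F := fun i h => by by_contra hi; simp [δ, hi] at h
  have hne : δ ≠ 0 := Function.ne_iff.mpr ⟨i, by simpa [δ, hiF] using hgi⟩
  rcases le_total (∑ i, δ i) 0 with hneg | hpos
  · exact ⟨δ, hne, hsupp, ha, hb, hneg⟩
  · refine ⟨-δ, neg_ne_zero.mpr hne, fun i h => hsupp i (by simpa using h), ?_, ?_, ?_⟩ <;>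
      simp [ha, hb, hpos]

def fractionalCoords (w : ι → ℝ) : Finset ι := univ.filter fun i => w i ∈ Set.Ioo 0 1

lemma exists_card_fractionalCoords_lt (a b : ι → ℝ) {w : ι → ℝ} (hw : ∀ i, w i ∈ Set.Icc 0 1)
    (hF : 2 < #(fractionalCoords w)) :
    ∃ w' : ι → ℝ, (∀ i, w' i ∈ Set.Icc 0 1) ∧ ∑ i, w' i ≤ ∑ i, w i ∧
      ∑ i, a i * w' i = ∑ i, a i * w i ∧ ∑ i, b i * w' i = ∑ i, b i * w i ∧
      #(fractionalCoords w') < #(fractionalCoords w) := by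
  obtain ⟨δ, hδ, hδF, haδ, hbδ, hδsum⟩ := exists_ne_zero_sum_mul_eq_zero a b hF
  have hwδ : ∀ i, δ i ≠ 0 → w i ∈ Set.Ioo 0 1 := fun i h => by
    simpa [fractionalCoords] using hδF i h
  obtain ⟨ε, hε, hbox, i₀, hδi₀, hexit⟩ := exists_pos_exit_cube hw hwδ hδ
  have hsum : ∀ c : ι → ℝ, ∑ i, c i * (w i + ε * δ i) = ∑ i, c i * w i + ε * ∑ i, c i * δ i :=
    fun c => by simp only [mul_add, sum_add_distrib, mul_sum, mul_left_comm]
  have hsub : fractionalCoords (fun i => w i + ε * δ i) ⊆ (fractionalCoords w).erase i₀ := by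
    intro i hi
    have hi' : w i + ε * δ i ∈ Set.Ioo 0 1 := by simpa [fractionalCoords] using hi
    refine mem_erase.mpr ⟨fun h => hexit (h ▸ hi'), ?_⟩
    by_cases hδi : δ i = 0
    · simpa [fractionalCoords, hδi] using hi'
    · exact hδF i hδi
  refine ⟨fun i => w i + ε * δ i, hbox, ?_, ?_, ?_, ?_⟩
  · simpa [sum_add_distrib, ← mul_sum] using mul_nonpos_of_nonneg_of_nonpos hε.le hδsum
  · simp [hsum, haδ]
  · simp [hsum, hbδ]
  · exact (card_le_card hsub).trans_lt (card_erase_lt_of_mem (hδF i₀ hδi₀))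

lemma sum_mul_le_sum_filter_ne_zero {a w : ι → ℝ} (ha : ∀ i, 0 ≤ a i)
    (hw : ∀ i, w i ∈ Set.Icc 0 1) : ∑ i, a i * w i ≤ ∑ i with w i ≠ 0, a i := by
  rw [sum_filter]
  refine sum_le_sum fun i _ => ?_
  split_ifs with h
  · exact mul_le_of_le_one_right (ha i) (hw i).2
  · simp [not_not.mp h]

lemma card_filter_ne_zero_le_add_one {k : ℕ} {w : ι → ℝ} (hw : ∀ i, w i ∈ Set.Icc 0 1)
    (hk : ∑ i, w i ≤ k) (hF : #(fractionalCoords w) ≤ 2) : #{i | w i ≠ 0} ≤ k + 1 := by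
  have hpt : ∀ i, (if w i ≠ 0 then (1 : ℝ) else 0) ≤
      w i + if w i ∈ Set.Ioo 0 1 then 1 - w i else 0 := fun i => by
    obtain ⟨h0, h1⟩ := hw i
    split_ifs <;> grind
  have hcard : (#{i | w i ≠ 0} : ℝ) ≤ ∑ i, w i + ∑ i ∈ fractionalCoords w, (1 - w i) := by
    calc (#{i | w i ≠ 0} : ℝ) = ∑ i, if w i ≠ 0 then (1 : ℝ) else 0 := by
          rw [sum_boole]
      _ ≤ ∑ i, (w i + if w i ∈ Set.Ioo 0 1 then 1 - w i else 0) := sum_le_sum fun i _ => hpt i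
      _ = ∑ i, w i + ∑ i ∈ fractionalCoords w, (1 - w i) := by
          rw [sum_add_distrib, fractionalCoords, sum_filter]
  have hdefect : ∑ i ∈ fractionalCoords w, (1 - w i) < 2 := by
    rcases (fractionalCoords w).eq_empty_or_nonempty with hempty | hne
    · simp [hempty]
    · calc ∑ i ∈ fractionalCoords w, (1 - w i) < ∑ i ∈ fractionalCoords w, (1 : ℝ) :=
            sum_lt_sum_of_nonempty hne fun i hi => by
              simp only [fractionalCoords, mem_filter] at hi
              linarith [hi.2.1]
        _ ≤ 2 := by simpa using (Nat.cast_le (α := ℝ)).mpr hF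
  have hlt : (#{i | w i ≠ 0} : ℝ) < k + 2 := by linarith
  have : #{i | w i ≠ 0} < k + 2 := by exact_mod_cast hlt
  omega

theorem exists_card_le_add_one_of_sum_le (k : ℕ) {a b : ι → ℝ} (ha : ∀ i, 0 ≤ a i)
    (hb : ∀ i, 0 ≤ b i) {w : ι → ℝ} (hw : ∀ i, w i ∈ Set.Icc 0 1) (hk : ∑ i, w i ≤ k) :
    ∃ S : Finset ι, #S ≤ k + 1 ∧ ∑ i, a i * w i ≤ ∑ i ∈ S, a i ∧
      ∑ i, b i * w i ≤ ∑ i ∈ S, b i := by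
  induction hn : #(fractionalCoords w) using Nat.strong_induction_on generalizing w with
  | _ n ih =>
    by_cases hF : n ≤ 2
    · exact ⟨_, card_filter_ne_zero_le_add_one hw hk (hn ▸ hF),
        sum_mul_le_sum_filter_ne_zero ha hw, sum_mul_le_sum_filter_ne_zero hb hw⟩
    · obtain ⟨w', hw', hsum, ha', hb', hlt⟩ := exists_card_fractionalCoords_lt a b hw (by omega)
      obtain ⟨S, hS, haS, hbS⟩ := ih _ (hn ▸ hlt) hw' (hsum.trans hk) rfl
      exact ⟨S, hS, ha' ▸ haS, hb' ▸ hbS⟩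

end

lemma sum_card_filter_mul {α β : Type*} [Fintype β] (T : Finset α) (f : α → β) (g : β → ℝ) :
    ∑ c, (#{j ∈ T | f j = c} : ℝ) * g c = ∑ j ∈ T, g (f j) := by
  rw [← sum_fiberwise' T f g]
  simp

section Clustering

variable {P : Type*} [MetricSpace P]

lemma exists_separated_centers {α : Type*} [LinearOrder α] (z : P → α) {ρ : ℝ} (hρ : 0 ≤ ρ)
    (Q : Finset P) :
    ∃ C ⊆ Q, ∃ f : P → P, (∀ j ∈ Q, f j ∈ C ∧ dist j (f j) ≤ ρ ∧ z j ≤ z (f j)) ∧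
      (C : Set P).Pairwise fun c c' => ρ < dist c c' := by
  induction Q using Finset.strongInduction with
  | H Q ih =>
  rcases Q.eq_empty_or_nonempty with rfl | hQ
  · exact ⟨∅, empty_subset _, id, by simp, by simp⟩
  obtain ⟨c, hc, hmax⟩ := exists_max_image Q z hQ
  have hfar : Q.filter (fun j => ρ < dist j c) ⊂ Q :=
    filter_ssubset.mpr ⟨c, hc, by simpa using hρ⟩
  obtain ⟨C, hCQ, f, hf, hsep⟩ := ih _ hfar
  refine ⟨insert c C, insert_subset hc (hCQ.trans hfar.subset),
    fun j => if dist j c ≤ ρ then c else f j, fun j hj => ?_, ?_⟩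
  · by_cases hjc : dist j c ≤ ρ
    · simpa [hjc] using hmax j hj
    · obtain ⟨hfC, hfdist, hfz⟩ := hf j (mem_filter.mpr ⟨hj, not_le.mp hjc⟩)
      simpa [hjc, hfC] using ⟨hfdist, hfz⟩
  · rw [coe_insert, Set.pairwise_insert]
    refine ⟨hsep, fun c' hc' _ => ?_⟩
    have hfar' := (mem_filter.mp (hCQ hc')).2
    exact ⟨dist_comm c c' ▸ hfar', hfar'⟩

variable [Fintype P]

lemma disjoint_bal_of_add_lt_dist {c c' : P} {ρ σ : ℝ} (h : ρ + σ < dist c c') :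
    Disjoint (bal c ρ) (bal c' σ) := by
  refine disjoint_left.mpr fun i hi hi' => ?_
  simp only [bal, mem_filter, mem_univ, true_and] at hi hi'
  linarith [dist_triangle_left c c' i]

lemma sum_sum_bal_le_sum {C : Finset P} {ρ : ℝ}
    (hC : (C : Set P).Pairwise fun c c' => ρ + ρ < dist c c') {x : P → ℝ} (hx : ∀ i, 0 ≤ x i) :
    ∑ c ∈ C, ∑ i ∈ bal c ρ, x i ≤ ∑ i, x i := by
  rw [← sum_biUnion (t := fun c => bal c ρ) (hC.mono' fun _ _ => disjoint_bal_of_add_lt_dist)]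
  exact sum_le_sum_of_subset_of_nonneg (subset_univ _) fun i _ _ => hx i

lemma sum_card_filter_le_card_inter_biUnion_bal (T S : Finset P) {f : P → P} {ρ : ℝ}
    (hf : ∀ j ∈ T, dist j (f j) ≤ ρ) :
    ∑ c ∈ S, #{j ∈ T | f j = c} ≤ #(T ∩ S.biUnion fun c => bal c ρ) := by
  calc ∑ c ∈ S, #{j ∈ T | f j = c} = #{j ∈ T | f j ∈ S} := by
        rw [card_eq_sum_card_fiberwise (s := {j ∈ T | f j ∈ S}) (t := S) (f := f)
          fun j hj => (mem_filter.mp hj).2]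
        refine sum_congr rfl fun c hc => congrArg card ?_
        rw [filter_filter]
        exact filter_congr fun j _ => ⟨fun h => ⟨h ▸ hc, h⟩, fun h => h.2⟩
    _ ≤ #(T ∩ S.biUnion fun c => bal c ρ) := card_le_card fun j hj => by
        obtain ⟨hjT, hjS⟩ := mem_filter.mp hj
        simpa [bal, hjT] using ⟨f j, hjS, hf j hjT⟩

end Clustering

theorem stmt2_general {P : Type*} [Fintype P] [MetricSpace P]
    (R B : Finset P)
    (k r b : ℕ) (x z : P → ℝ)
    (hx0 : ∀ i, 0 ≤ x i)
    (hz0 : ∀ j, 0 ≤ z j) (hz1 : ∀ j, z j ≤ 1)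
    (hcov : ∀ j : P, z j ≤ ∑ i ∈ bal j 1, x i)
    (hk : ∑ i : P, x i ≤ (k : ℝ))
    (hr : (r : ℝ) ≤ ∑ j ∈ R, z j)
    (hb : (b : ℝ) ≤ ∑ j ∈ B, z j) :
    ∃ C : Finset P, C.card ≤ k + 1 ∧
      b ≤ (B ∩ C.biUnion fun c => bal c 2).card ∧
      r ≤ (R ∩ C.biUnion fun c => bal c 2).card := by
  obtain ⟨C, -, f, hf, hsep⟩ := exists_separated_centers z zero_le_two univ
  simp only [mem_univ, true_implies, forall_and] at hf
  obtain ⟨hfC, hfdist, hfz⟩ := hf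
  set w : P → ℝ := fun c => if c ∈ C then z c else 0
  have hw : ∀ c, w c ∈ Set.Icc 0 1 := fun c => by
    by_cases hc : c ∈ C <;> simp [w, hc, hz0, hz1]
  have hwk : ∑ c, w c ≤ k := calc
    ∑ c, w c = ∑ c ∈ C, z c := Fintype.sum_ite_mem C z
    _ ≤ ∑ c ∈ C, ∑ i ∈ bal c 1, x i := sum_le_sum fun c _ => hcov c
    _ ≤ ∑ i, x i := sum_sum_bal_le_sum (hsep.mono' fun _ _ h => by linarith) hx0
    _ ≤ k := hk
  have hfiber : ∀ T : Finset P, ∑ j ∈ T, z j ≤ ∑ c, (#{j ∈ T | f j = c} : ℝ) * w c := fun T => by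
    rw [sum_card_filter_mul]
    exact sum_le_sum fun j _ => by simpa [w, hfC j] using hfz j
  obtain ⟨S, hS, hSb, hSr⟩ := exists_card_le_add_one_of_sum_le k
    (fun _ => Nat.cast_nonneg _) (fun _ => Nat.cast_nonneg _) hw hwk
  refine ⟨S, hS, le_trans ?_ (sum_card_filter_le_card_inter_biUnion_bal B S fun j _ => hfdist j),
    le_trans ?_ (sum_card_filter_le_card_inter_biUnion_bal R S fun j _ => hfdist j)⟩
  · exact_mod_cast hb.trans ((hfiber B).trans hSb)
  · exact_mod_cast hr.trans ((hfiber R).trans hSr)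

/-- given a feasible fractional solution `(x, z)` to LP1, at most `k + 1` balls of
radius two suffice to cover at least `r` red points and at least `b` blue points. -/
theorem stmt2 {P : Type*} [Fintype P] [MetricSpace P]
    (R B : Finset P) (hpart : ∀ p : P, (p ∈ R ∧ p ∉ B) ∨ (p ∈ B ∧ p ∉ R))
    (k r b : ℕ) (x z : P → ℝ)
    (hx0 : ∀ i, 0 ≤ x i) (hx1 : ∀ i, x i ≤ 1)
    (hz0 : ∀ j, 0 ≤ z j) (hz1 : ∀ j, z j ≤ 1)
    (hcov : ∀ j : P, z j ≤ ∑ i ∈ bal j 1, x i)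
    (hk : ∑ i : P, x i ≤ (k : ℝ))
    (hr : (r : ℝ) ≤ ∑ j ∈ R, z j)
    (hb : (b : ℝ) ≤ ∑ j ∈ B, z j) :
    ∃ C : Finset P, C.card ≤ k + 1 ∧
      b ≤ (B ∩ C.biUnion fun c => bal c 2).card ∧
      r ≤ (R ∩ C.biUnion fun c => bal c 2).card :=
  stmt2_general R B k r b x z hx0 hz0 hz1 hcov hk hr hb
end

section
/- Let n, k ∈ ℕ with k ≤ n, let a : Fin n → ℤ with a i ≥ 0 for all i, let A = Σ_i a i, and suppose A is even. Then there exists a subset S ⊆ Fin n with |S| ≤ k, Σ_{i ∈ S} (A + a i) ≥ k·A + A/2 and Σ_{i ∈ S} (A − a i) ≥ k·A − A/2, if and only if there exists a subset S ⊆ Fin n with |S| = k and Σ_{i ∈ S} a i = A/2. (This is the correctness of the reduction embedding subset-sum into colorful k-center: a set of at most k chosen clusters, where cluster i contains A + a_i red points and A − a_i blue points, meets the coverage requirements r = kA + A/2 and b = kA − A/2 exactly when it corresponds to a size-k subset of the numbers summing to A/2.) -/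
open Finset

section OrderedRing

variable {ι R : Type*} [CommRing R] [LinearOrder R] [IsStrictOrderedRing R]

/-- Adding the two coverage inequalities gives `k * A ≤ c * A`, so `c = k` once `A > 0`;
the two inequalities then pinch `s` to `t`. -/
theorem eq_and_eq_of_coverage {A c k s t : R} (hA : 0 < A) (hc : c ≤ k)
    (hred : k * A + t ≤ c * A + s) (hblue : k * A - t ≤ c * A - s) : c = k ∧ s = t := by
  have hck : c = k := by
    refine le_antisymm hc (le_of_mul_le_mul_right ?_ hA)
    linarith
  subst hck
  exact ⟨rfl, by linarith⟩

theorem coverage_iff_of_pos (S : Finset ι) (a : ι → R) {A : R} (hA : 0 < A) (t : R) {k : ℕ}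
    (hS : #S ≤ k) :
    ((k : R) * A + t ≤ ∑ i ∈ S, (A + a i) ∧ (k : R) * A - t ≤ ∑ i ∈ S, (A - a i)) ↔
      #S = k ∧ ∑ i ∈ S, a i = t := by
  simp only [sum_add_distrib, sum_sub_distrib, sum_const, nsmul_eq_mul]
  constructor
  · rintro ⟨hred, hblue⟩
    obtain ⟨hcard, hsum⟩ := eq_and_eq_of_coverage hA (by exact_mod_cast hS) hred hblue
    exact ⟨by exact_mod_cast hcard, hsum⟩
  · rintro ⟨hcard, rfl⟩
    subst hcard
    exact ⟨le_rfl, le_rfl⟩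

end OrderedRing

theorem stmt10_general (n k : ℕ) (hk : k ≤ n) (a : Fin n → ℤ) (ha : ∀ i, 0 ≤ a i)
    (A : ℤ) (hA : A = ∑ i, a i) :
    (∃ S : Finset (Fin n), S.card ≤ k ∧
        (k : ℤ) * A + A / 2 ≤ ∑ i ∈ S, (A + a i) ∧
        (k : ℤ) * A - A / 2 ≤ ∑ i ∈ S, (A - a i)) ↔
      (∃ S : Finset (Fin n), S.card = k ∧ ∑ i ∈ S, a i = A / 2) := by
  rcases (hA ▸ sum_nonneg fun i _ => ha i : 0 ≤ A).eq_or_lt with hzero | hpos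
  · have ha0 : a = 0 := funext fun i =>
      (sum_eq_zero_iff_of_nonneg fun i _ => ha i).1 (hA ▸ hzero.symm) i (mem_univ i)
    subst ha0 hzero
    obtain ⟨T, -, hT⟩ := exists_subset_card_eq (s := (univ : Finset (Fin n))) (by simpa using hk)
    exact ⟨fun _ => ⟨T, hT, by simp⟩, fun ⟨S, hS, _⟩ => ⟨S, hS.le, by simp⟩⟩
  · constructor
    · rintro ⟨S, hS, hcov⟩
      exact ⟨S, (coverage_iff_of_pos S a hpos _ hS).1 hcov⟩
    · rintro ⟨S, hS, hsum⟩
      exact ⟨S, hS.le, (coverage_iff_of_pos S a hpos _ hS.le).2 ⟨hS, hsum⟩⟩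

/-- correctness of the reduction embedding subset-sum into colorful
`k`-center. -/
theorem stmt10 (n k : ℕ) (hk : k ≤ n) (a : Fin n → ℤ) (ha : ∀ i, 0 ≤ a i)
    (A : ℤ) (hA : A = ∑ i, a i) (heven : Even A) :
    (∃ S : Finset (Fin n), S.card ≤ k ∧
        (k : ℤ) * A + A / 2 ≤ ∑ i ∈ S, (A + a i) ∧
        (k : ℤ) * A - A / 2 ≤ ∑ i ∈ S, (A - a i)) ↔
      (∃ S : Finset (Fin n), S.card = k ∧ ∑ i ∈ S, a i = A / 2) :=
  stmt10_general n k hk a ha A hA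
end

section
/- Let n ∈ ℕ, let A be a symmetric real (n+1) × (n+1) matrix, and let B be its leading principal n × n submatrix (B i j = A (Fin.castSucc i) (Fin.castSucc j)). If B is positive semidefinite and the rank of A equals the rank of B, then A is positive semidefinite. -/
/-!
Let `M` be the first `n` columns of `A`. Its column space lies in that of `A`, and its rank lies
between `rank B` and `rank A`, so `rank A = rank B` makes the two column spaces equal: every
`A x` is `M v` for some `v`. Restricting `A x = M v` to the first `n` rows gives `B v`, so by
symmetry `xᵀ A x = xᵀ M v = (Mᵀ x)ᵀ v = (B v)ᵀ v ≥ 0`.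
-/

open Matrix

namespace Matrix

variable {l m n 𝕜 : Type*} [Fintype m] [Fintype n]

theorem range_mulVecLin_submatrix_id_le [Field 𝕜] (A : Matrix l m 𝕜) (c : n → m) :
    LinearMap.range (A.submatrix id c).mulVecLin ≤ LinearMap.range A.mulVecLin := by
  simp only [range_mulVecLin]
  exact Submodule.span_mono <| by rintro _ ⟨j, rfl⟩; exact ⟨c j, rfl⟩

theorem exists_submatrix_id_mulVec_eq_of_rank_le [Field 𝕜] (A : Matrix l m 𝕜) (c : n → m)
    (hrank : A.rank ≤ (A.submatrix id c).rank) (x : m → 𝕜) :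
    ∃ v, A.submatrix id c *ᵥ v = A *ᵥ x := by
  have hrange : LinearMap.range (A.submatrix id c).mulVecLin = LinearMap.range A.mulVecLin :=
    Submodule.eq_of_le_of_finrank_le (range_mulVecLin_submatrix_id_le A c) hrank
  exact hrange.ge (LinearMap.mem_range_self A.mulVecLin x)

theorem IsHermitian.dotProduct_mulVec_eq_of_submatrix_id_mulVec_eq [CommSemiring 𝕜] [StarRing 𝕜]
    {A : Matrix m m 𝕜} (hA : A.IsHermitian) (e : n → m) {x : m → 𝕜} {v : n → 𝕜}
    (h : A.submatrix id e *ᵥ v = A *ᵥ x) :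
    star x ⬝ᵥ A *ᵥ x = star v ⬝ᵥ A.submatrix e e *ᵥ v := by
  have hBv : A.submatrix e e *ᵥ v = (A *ᵥ x) ∘ e := by rw [← h]; rfl
  calc star x ⬝ᵥ A *ᵥ x
      = (star x ᵥ* A.submatrix id e) ⬝ᵥ v := by rw [← h, dotProduct_mulVec]
    _ = star (A.submatrix e e *ᵥ v) ⬝ᵥ v := by
        rw [hBv]
        change (star x ᵥ* A) ∘ e ⬝ᵥ v = star (A *ᵥ x) ∘ e ⬝ᵥ v
        rw [star_mulVec, hA.eq]
    _ = star v ⬝ᵥ A.submatrix e e *ᵥ v := by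
        rw [star_mulVec, ← dotProduct_mulVec, (hA.submatrix e).eq]

theorem PosSemidef.of_submatrix_of_rank_le [Field 𝕜] [StarRing 𝕜] [PartialOrder 𝕜]
    {A : Matrix m m 𝕜} (hA : A.IsHermitian) (e : n → m) (hB : (A.submatrix e e).PosSemidef)
    (hrank : A.rank ≤ (A.submatrix e e).rank) : A.PosSemidef := by
  refine .of_dotProduct_mulVec_nonneg hA fun x ↦ ?_
  obtain ⟨v, hv⟩ := exists_submatrix_id_mulVec_eq_of_rank_le A e
    (hrank.trans (rank_submatrix_le (A.submatrix id e) e id)) x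
  rw [hA.dotProduct_mulVec_eq_of_submatrix_id_mulVec_eq e hv]
  exact hB.dotProduct_mulVec_nonneg v

end Matrix

/-- if a symmetric real `(n+1) × (n+1)` matrix `A` has positive semidefinite
leading principal `n × n` submatrix `B` and `rank A = rank B`, then `A` is positive
semidefinite. -/
theorem stmt11 (n : ℕ) (A : Matrix (Fin (n + 1)) (Fin (n + 1)) ℝ) (hA : A.IsSymm)
    (B : Matrix (Fin n) (Fin n) ℝ)
    (hB : B = A.submatrix Fin.castSucc Fin.castSucc)
    (hBpsd : B.PosSemidef) (hrank : A.rank = B.rank) :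
    A.PosSemidef := by
  subst hB
  exact .of_submatrix_of_rank_le (isHermitian_iff_isSymm.mpr hA) _ hBpsd hrank.le
end
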